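/- Let β ≥ 0, let ℓ = [x̲, x̄] ⊂ ℝ be a bounded segment, and let g : ℓ → [0,∞) be an integrable β-log-concave function with ∫_ℓ g > 0, sandwiched by a log-concave function h on ℓ with e^{−β} h(x) ≤ g(x) ≤ h(x) for all x ∈ ℓ. Let p ∈ ℓ satisfy g(p) ≥ e^{−3β} sup_{z∈ℓ} g(z), let ε̃ ∈ (0, e^{−2β}/2), and let e_{−1} ≤ p ≤ e_1 be points of ℓ such that: either e_{−1} = x̲ and g(x̲) ≥ (1/2)e^{−β} ε̃ g(p), or (1/2)e^{−β} ε̃ g(p) ≤ g(e_{−1}) ≤ ε̃ g(p); and symmetrically either e_1 = x̄ and g(x̄) ≥ (1/2)e^{−β} ε̃ g(p), or (1/2)e^{−β} ε̃ g(p) ≤ g(e_1) ≤ ε̃ g(p). If X is uniformly distributed on [e_{−1}, e_1], then P( g(X) ≥ (1/2) e^{−2β} g(p) ) ≥ (log 2) / log(2/ε̃). -/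

import Mathlib

/-!
Let `c = log 2 / log (2/ε)`, the exponent with `(ε/2)^c = 1/2`. If an endpoint `e` has
`g(e) ≥ e^{-β} ε g(p) / 2`, then for `0 ≤ α ≤ c` the `β`-log-concavity of `g` gives
`g(α e + (1 - α) p) ≥ e^{-β} (e^{-β} ε / 2)^α g(p) ≥ e^{-β} · (e^{-β} / 2) · g(p)`.
So the fraction `c` of each of `[e₋, p]` and `[p, e₁]` next to `p` lies in the superlevel set
`{g ≥ e^{-2β} g(p) / 2}`, whose uniform probability on `[e₋, e₁]` is therefore at least `c`.
That `g(p) > 0` and `e₋ < e₁` (so that the uniform distribution makes sense) follows from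
`∫ g > 0`, since `g(p)` dominates `g` up to a constant and an endpoint strictly inside `ℓ`
has `g ≤ ε g(p) < g(p)`.
-/

open MeasureTheory ProbabilityTheory

def IsBetaLogConcaveOn (β : ℝ) (s : Set ℝ) (g : ℝ → ℝ) : Prop :=
  ∀ x ∈ s, ∀ y ∈ s, ∀ α : ℝ, α ∈ Set.Icc (0:ℝ) 1 →
    Real.exp (-β) * (g x ^ α * g y ^ (1 - α)) ≤ g (α * x + (1 - α) * y)

lemma pos_of_forall_mul_le_of_setIntegral_pos {X : Type*} [MeasurableSpace X] {μ : Measure X}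
    {s : Set X} {g : X → ℝ} {k : ℝ} {p : X} (hg0 : ∀ z ∈ s, 0 ≤ g z) (hk : 0 < k)
    (hmax : ∀ z ∈ s, k * g z ≤ g p) (hint : 0 < ∫ z in s, g z ∂μ) : 0 < g p := by
  by_contra! hp
  have hzero : ∀ z ∈ s, g z = 0 := fun z hz => by
    nlinarith [hg0 z hz, hmax z hz]
  rw [setIntegral_eq_zero_of_forall_eq_zero hzero] at hint
  exact hint.false

lemma lt_of_setIntegral_Icc_pos {f : ℝ → ℝ} {a b : ℝ} (h : 0 < ∫ x in Set.Icc a b, f x) :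
    a < b := by
  by_contra! hba
  have hnull : volume (Set.Icc a b) = 0 := by
    rw [Real.volume_Icc, ENNReal.ofReal_eq_zero]; linarith
  rw [setIntegral_measure_zero f hnull] at h
  exact h.false

lemma log_two_div_log_two_div_eq_logb {ε : ℝ} (hε : 0 < ε) :
    Real.log 2 / Real.log (2 / ε) = Real.logb (ε / 2) (1 / 2) := by
  rw [Real.logb, one_div, Real.log_inv, Real.log_div hε.ne' two_ne_zero,
    Real.log_div two_ne_zero hε.ne', ← neg_div_neg_eq, neg_sub]

lemma log_two_div_log_two_div_mem_Ioc {ε : ℝ} (hε0 : 0 < ε) (hε1 : ε ≤ 1) :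
    Real.log 2 / Real.log (2 / ε) ∈ Set.Ioc 0 1 := by
  have hlog2 : 0 < Real.log 2 := Real.log_pos one_lt_two
  have hle : Real.log 2 ≤ Real.log (2 / ε) :=
    Real.log_le_log two_pos (by rw [le_div_iff₀ hε0]; linarith)
  exact ⟨div_pos hlog2 (hlog2.trans_le hle), div_le_one_of_le₀ hle (hlog2.trans_le hle).le⟩

lemma half_mul_exp_neg_le_rpow {β ε : ℝ} (hβ : 0 ≤ β) (hε0 : 0 < ε) (hε1 : ε ≤ 1) :
    (1/2) * Real.exp (-β) ≤
      ((1/2) * Real.exp (-β) * ε) ^ (Real.log 2 / Real.log (2 / ε)) := by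
  obtain ⟨-, hc1⟩ := log_two_div_log_two_div_mem_Ioc hε0 hε1
  have hhalf : (ε / 2) ^ (Real.log 2 / Real.log (2 / ε)) = 1 / 2 := by
    rw [log_two_div_log_two_div_eq_logb hε0]
    exact Real.rpow_logb (by positivity) (by linarith) (by norm_num)
  rw [show (1/2) * Real.exp (-β) * ε = Real.exp (-β) * (ε / 2) by ring,
    Real.mul_rpow (Real.exp_pos _).le (by positivity), hhalf, ← Real.exp_mul, mul_comm]
  gcongr
  nlinarith

lemma le_rpow_mul_rpow_one_sub {a b t c α : ℝ} (hb : 0 ≤ b) (ht0 : 0 < t) (ht1 : t ≤ 1)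
    (hab : t * b ≤ a) (hα : 0 ≤ α) (hαc : α ≤ c) : t ^ c * b ≤ a ^ α * b ^ (1 - α) :=
  calc t ^ c * b ≤ t ^ α * b :=
        mul_le_mul_of_nonneg_right (Real.rpow_le_rpow_of_exponent_ge ht0 ht1 hαc) hb
    _ = (t * b) ^ α * b ^ (1 - α) := by
      rw [Real.mul_rpow ht0.le hb, mul_assoc, ← Real.rpow_add' hb (by norm_num)]
      norm_num
    _ ≤ a ^ α * b ^ (1 - α) := by gcongr

lemma exists_mem_Icc_mul_add_one_sub_mul_eq {p e c x : ℝ} (hc : 0 ≤ c)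
    (hx : x ∈ Set.uIcc p (p + c * (e - p))) :
    ∃ α ∈ Set.Icc 0 c, α * e + (1 - α) * p = x := by
  rw [← segment_eq_uIcc, segment_eq_image'] at hx
  obtain ⟨θ, ⟨hθ0, hθ1⟩, rfl⟩ := hx
  refine ⟨θ * c, ⟨by positivity, mul_le_of_le_one_left hc hθ1⟩, ?_⟩
  simp only [smul_eq_mul]
  ring

lemma Icc_add_mul_sub_subset_Icc {a b p c : ℝ} (ha : a ≤ p) (hb : p ≤ b) (hc1 : c ≤ 1) :
    Set.Icc (p + c * (a - p)) (p + c * (b - p)) ⊆ Set.Icc a b :=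
  Set.Icc_subset_Icc (by nlinarith) (by nlinarith)

lemma volume_Icc_add_mul_sub (a b p c : ℝ) :
    volume (Set.Icc (p + c * (a - p)) (p + c * (b - p))) = ENNReal.ofReal (c * (b - a)) := by
  rw [Real.volume_Icc]
  ring_nf

lemma ofReal_le_cond_Icc_apply {a b c : ℝ} (hab : a < b) {S : Set ℝ}
    (h : ENNReal.ofReal (c * (b - a)) ≤ volume (Set.Icc a b ∩ S)) :
    ENNReal.ofReal c ≤ volume[S | Set.Icc a b] := by
  have hne : ENNReal.ofReal (b - a) ≠ 0 := by simpa using hab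
  rw [cond_apply measurableSet_Icc, Real.volume_Icc,
    ← ENNReal.mul_le_iff_le_inv hne ENNReal.ofReal_ne_top, mul_comm,
    ← ENNReal.ofReal_mul' (by linarith)]
  exact h

lemma le_of_endpoint_condition {g : ℝ → ℝ} {e bd t u : ℝ}
    (h : (e = bd ∧ t ≤ g bd) ∨ (t ≤ g e ∧ g e ≤ u)) : t ≤ g e := by
  rcases h with ⟨rfl, h⟩ | ⟨h, -⟩ <;> exact h

lemma eq_of_endpoint_condition_of_lt {g : ℝ → ℝ} {e bd t u : ℝ}
    (h : (e = bd ∧ t ≤ g bd) ∨ (t ≤ g e ∧ g e ≤ u)) (hu : u < g e) : e = bd := by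
  rcases h with ⟨h, -⟩ | ⟨-, h⟩
  · exact h
  · exact absurd h hu.not_ge

namespace IsBetaLogConcaveOn

variable {β ε : ℝ} {s : Set ℝ} {g : ℝ → ℝ}

lemma half_mul_exp_neg_two_mul_le_of_mem_uIcc (hg : IsBetaLogConcaveOn β s g) (hβ : 0 ≤ β)
    (hε0 : 0 < ε) (hε1 : ε ≤ 1) {p : ℝ} (hp : p ∈ s) (hgp : 0 ≤ g p)
    ⦃e : ℝ⦄ (he : e ∈ s) (hge : (1/2) * Real.exp (-β) * ε * g p ≤ g e) ⦃x : ℝ⦄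
    (hx : x ∈ Set.uIcc p (p + Real.log 2 / Real.log (2 / ε) * (e - p))) :
    (1/2) * Real.exp (-2 * β) * g p ≤ g x := by
  obtain ⟨hc0, hc1⟩ := log_two_div_log_two_div_mem_Ioc hε0 hε1
  obtain ⟨α, ⟨hα0, hαc⟩, rfl⟩ := exists_mem_Icc_mul_add_one_sub_mul_eq hc0.le hx
  have ht1 : (1/2) * Real.exp (-β) * ε ≤ 1 := by
    nlinarith [Real.exp_le_one_iff.2 (neg_nonpos.2 hβ), Real.exp_pos (-β)]
  calc (1/2) * Real.exp (-2 * β) * g p = Real.exp (-β) * ((1/2) * Real.exp (-β) * g p) := by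
        rw [show -2 * β = -β + -β by ring, Real.exp_add]; ring
    _ ≤ Real.exp (-β) *
          (((1/2) * Real.exp (-β) * ε) ^ (Real.log 2 / Real.log (2 / ε)) * g p) := by
        gcongr; exact half_mul_exp_neg_le_rpow hβ hε0 hε1
    _ ≤ Real.exp (-β) * (g e ^ α * g p ^ (1 - α)) := by
        have := le_rpow_mul_rpow_one_sub hgp (by positivity) ht1 hge hα0 hαc
        gcongr
    _ ≤ g (α * e + (1 - α) * p) := hg e he p hp α ⟨hα0, hαc.trans hc1⟩

end IsBetaLogConcaveOn

theorem uniform_acceptance_probability_lower_bound_general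
    (β xlo xhi : ℝ) (hβ : 0 ≤ β) (g : ℝ → ℝ)
    (hg0 : ∀ x ∈ Set.Icc xlo xhi, 0 ≤ g x)
    (hgβ : ∀ x ∈ Set.Icc xlo xhi, ∀ y ∈ Set.Icc xlo xhi, ∀ α : ℝ, α ∈ Set.Icc (0:ℝ) 1 →
      Real.exp (-β) * (g x ^ α * g y ^ (1 - α)) ≤ g (α * x + (1 - α) * y))
    (hgpos : 0 < ∫ x in Set.Icc xlo xhi, g x)
    (p : ℝ) (hp : p ∈ Set.Icc xlo xhi)
    (hpmax : ∀ z ∈ Set.Icc xlo xhi, Real.exp (-3 * β) * g z ≤ g p)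
    (ε : ℝ) (hε0 : 0 < ε) (hε1 : ε < Real.exp (-2 * β) / 2)
    (em e1 : ℝ) (hem : em ∈ Set.Icc xlo xhi) (he1 : e1 ∈ Set.Icc xlo xhi)
    (hpem : em ≤ p) (hpe1 : p ≤ e1)
    (hcm : (em = xlo ∧ (1/2) * Real.exp (-β) * ε * g p ≤ g xlo) ∨
           ((1/2) * Real.exp (-β) * ε * g p ≤ g em ∧ g em ≤ ε * g p))
    (hc1 : (e1 = xhi ∧ (1/2) * Real.exp (-β) * ε * g p ≤ g xhi) ∨
           ((1/2) * Real.exp (-β) * ε * g p ≤ g e1 ∧ g e1 ≤ ε * g p)) :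
    ENNReal.ofReal (Real.log 2 / Real.log (2 / ε))
      ≤ ((volume (Set.Icc em e1))⁻¹ • volume.restrict (Set.Icc em e1))
          {x | (1/2) * Real.exp (-2 * β) * g p ≤ g x} := by
  have hεlt1 : ε < 1 := by
    linarith [Real.exp_le_one_iff.2 (by linarith : -2 * β ≤ 0)]
  have hgp : 0 < g p := pos_of_forall_mul_le_of_setIntegral_pos hg0 (Real.exp_pos _) hpmax hgpos
  have heme1 : em < e1 := by
    by_contra! hle
    have hεgp : ε * g p < g p := by nlinarith
    have hlo := eq_of_endpoint_condition_of_lt hcm (by rwa [le_antisymm hpem (hpe1.trans hle)])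
    have hhi := eq_of_endpoint_condition_of_lt hc1 (by rwa [le_antisymm (hle.trans hpem) hpe1])
    linarith [lt_of_setIntegral_Icc_pos hgpos]
  obtain ⟨-, hcle1⟩ := log_two_div_log_two_div_mem_Ioc hε0 hεlt1.le
  refine ofReal_le_cond_Icc_apply heme1 ?_
  rw [← volume_Icc_add_mul_sub em e1 p]
  refine measure_mono (Set.subset_inter (Icc_add_mul_sub_subset_Icc hpem hpe1 hcle1) ?_)
  have hsuper := IsBetaLogConcaveOn.half_mul_exp_neg_two_mul_le_of_mem_uIcc
    hgβ hβ hε0 hεlt1.le hp hgp.le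
  intro x hx
  rcases Set.Icc_subset_Icc_union_Icc (b := p) hx with hx | hx
  · exact hsuper hem (le_of_endpoint_condition hcm) (Set.Icc_subset_uIcc' hx)
  · exact hsuper he1 (le_of_endpoint_condition hc1) (Set.Icc_subset_uIcc hx)

/-- In the setting of the unidimensional rejection sampler (a
`β`-log-concave `g` on `ℓ = [x̲, x̄]` sandwiched by a log-concave `h`, a point `p` with
`g(p) ≥ e^{−3β} sup_ℓ g`, accuracy `ε̃ ∈ (0, e^{−2β}/2)` and points `e₋ ≤ p ≤ e₁` chosen
as in the initialization), if `X` is uniform on `[e₋, e₁]` then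
`P(g(X) ≥ (1/2) e^{−2β} g(p)) ≥ log 2 / log (2/ε̃)`. -/
theorem uniform_acceptance_probability_lower_bound
    (β xlo xhi : ℝ) (hβ : 0 ≤ β) (g h : ℝ → ℝ)
    (hg0 : ∀ x ∈ Set.Icc xlo xhi, 0 ≤ g x)
    (hgβ : ∀ x ∈ Set.Icc xlo xhi, ∀ y ∈ Set.Icc xlo xhi, ∀ α : ℝ, α ∈ Set.Icc (0:ℝ) 1 →
      Real.exp (-β) * (g x ^ α * g y ^ (1 - α)) ≤ g (α * x + (1 - α) * y))
    (hgint : IntegrableOn g (Set.Icc xlo xhi))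
    (hgpos : 0 < ∫ x in Set.Icc xlo xhi, g x)
    (hh0 : ∀ x ∈ Set.Icc xlo xhi, 0 ≤ h x)
    (hhlogconc : ∀ x ∈ Set.Icc xlo xhi, ∀ y ∈ Set.Icc xlo xhi, ∀ α : ℝ, α ∈ Set.Icc (0:ℝ) 1 →
      h x ^ α * h y ^ (1 - α) ≤ h (α * x + (1 - α) * y))
    (hsand : ∀ x ∈ Set.Icc xlo xhi, Real.exp (-β) * h x ≤ g x ∧ g x ≤ h x)
    (p : ℝ) (hp : p ∈ Set.Icc xlo xhi)
    (hpmax : ∀ z ∈ Set.Icc xlo xhi, Real.exp (-3 * β) * g z ≤ g p)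
    (ε : ℝ) (hε0 : 0 < ε) (hε1 : ε < Real.exp (-2 * β) / 2)
    (em e1 : ℝ) (hem : em ∈ Set.Icc xlo xhi) (he1 : e1 ∈ Set.Icc xlo xhi)
    (hpem : em ≤ p) (hpe1 : p ≤ e1)
    (hcm : (em = xlo ∧ (1/2) * Real.exp (-β) * ε * g p ≤ g xlo) ∨
           ((1/2) * Real.exp (-β) * ε * g p ≤ g em ∧ g em ≤ ε * g p))
    (hc1 : (e1 = xhi ∧ (1/2) * Real.exp (-β) * ε * g p ≤ g xhi) ∨
           ((1/2) * Real.exp (-β) * ε * g p ≤ g e1 ∧ g e1 ≤ ε * g p)) :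
    ENNReal.ofReal (Real.log 2 / Real.log (2 / ε))
      ≤ ((volume (Set.Icc em e1))⁻¹ • volume.restrict (Set.Icc em e1))
          {x | (1/2) * Real.exp (-2 * β) * g p ≤ g x} :=
  uniform_acceptance_probability_lower_bound_general β xlo xhi hβ g hg0 hgβ hgpos p hp hpmax ε hε0
    hε1 em e1 hem he1 hpem hpe1 hcm hc1
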